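/- arXiv:1605.00393 — 2 statements merged into one kernel-verified Lean document; each statement's English description precedes it below -/
import Mathlib

section
/- For every x ∈ ℂ, the sequences ψ^{+}(x) and ψ^{−}(x) both satisfy the three-term recurrence q^{−n+1} ψ_{n−1} + q^{−n} ψ_{n+1} = x ψ_n for all n ∈ ℤ, and their Wronskian satisfies q^{−n} (ψ_{n+1}^{+}(x) ψ_n^{−}(x) − ψ_n^{+}(x) ψ_{n+1}^{−}(x)) = 2 i q^{1/2} for every n ∈ ℤ; in particular ψ^{+}(x) and ψ^{−}(x) are linearly independent. -/
open Complex Filter Topology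

/-- Finite q-Pochhammer symbol `(a;q)_n`. -/
noncomputable def qp (q a : ℂ) (n : ℕ) : ℂ := ∏ k ∈ Finset.range n, (1 - a * q ^ k)

/-- Infinite q-Pochhammer symbol `(a;q)_∞`. -/
noncomputable def qpInf (q a : ℂ) : ℂ := ∏' k : ℕ, (1 - a * q ^ k)

/-- Real power of `q`, coerced to `ℂ`. -/
noncomputable def qr (q : ℝ) (r : ℝ) : ℂ := ((q ^ r : ℝ) : ℂ)

/-- The solutions ψ_n^{±}(x); `s = 1` gives `ψ⁺`, `s = -1` gives `ψ⁻`. -/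
noncomputable def psi (q : ℝ) (s x : ℂ) (n : ℤ) : ℂ :=
  (s * Complex.I) ^ n * qr q ((n : ℝ) / 2) *
    ∑' k : ℕ, (-1) ^ k * (q : ℂ) ^ (k * (k - 1) / 2) *
      (-s * Complex.I * x * qr q ((n : ℝ) + 1 / 2)) ^ k /
        (qp (q : ℂ) (q : ℂ) k * qp (q : ℂ) (-(q : ℂ)) k)

/-!
Put `w = ± i √q`. Then `ψ_n^± = w ^ n φ(-w x q ^ n)`, where `φ(z) = ∑ c_k z ^ k` is the entire
function `₁φ₁(0; -q; q, z)`, and because `w ^ 2 = -q` the three-term recurrence reduces to the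
q-difference equation `q φ(q z) - q φ(z / q) = z φ(z)`, which is the coefficient identity
`(1 - q ^ (2k+2)) c_{k+1} = -q ^ k c_k`. The Casoratian `q ^ (-n) (f_{n+1} g_n - f_n g_{n+1})`
of two solutions is independent of `n`; for the solutions attached to `w` and `-w` it equals
`w (φ(…) φ(…) + φ(…) φ(…))` with all arguments tending to `0` as `n → ∞`, so it equals its limit
`2 w`. A nonzero Casoratian forces linear independence.
-/

noncomputable def phiCoeff (q : ℂ) (k : ℕ) : ℂ :=
  (-1) ^ k * q ^ (k * (k - 1) / 2) / (qp q q k * qp q (-q) k)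

noncomputable def phi (q z : ℂ) : ℂ := ∑' k : ℕ, phiCoeff q k * z ^ k

section phi

variable {q : ℂ}

theorem qp_succ (a : ℂ) (k : ℕ) : qp q a (k + 1) = qp q a k * (1 - a * q ^ k) :=
  Finset.prod_range_succ _ k

theorem phiCoeff_zero : phiCoeff q 0 = 1 := by
  simp [phiCoeff, qp]

-- No hypothesis is needed: if `1 - q ^ (2 * (k + 1)) = 0`, both sides are `0` by `x / 0 = 0`.
theorem phiCoeff_succ (k : ℕ) :
    phiCoeff q (k + 1) = -q ^ k * phiCoeff q k / (1 - q ^ (2 * (k + 1))) := by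
  have hden : qp q q (k + 1) * qp q (-q) (k + 1) =
      qp q q k * qp q (-q) k * (1 - q ^ (2 * (k + 1))) := by
    rw [qp_succ, qp_succ]; ring
  rw [phiCoeff, phiCoeff, hden, ← div_div, Nat.triangle_succ]
  ring

theorem one_sub_pow_ne_zero (hq : ‖q‖ < 1) {m : ℕ} (hm : m ≠ 0) : 1 - q ^ m ≠ 0 := by
  refine sub_ne_zero.2 fun h => (pow_lt_one₀ (norm_nonneg q) hq hm).ne ?_
  rw [← norm_pow, ← h, norm_one]

theorem norm_phiCoeff_succ_le (hq : ‖q‖ < 1) (k : ℕ) :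
    ‖phiCoeff q (k + 1)‖ ≤ ‖q‖ ^ k / (1 - ‖q‖) * ‖phiCoeff q k‖ := by
  have hm : 2 * (k + 1) ≠ 0 := by omega
  have hden : 1 - ‖q‖ ≤ ‖1 - q ^ (2 * (k + 1))‖ :=
    calc 1 - ‖q‖ ≤ ‖(1 : ℂ)‖ - ‖q ^ (2 * (k + 1))‖ := by
          rw [norm_one, norm_pow]
          linarith [pow_le_of_le_one (norm_nonneg q) hq.le hm]
      _ ≤ _ := norm_sub_norm_le _ _
  rw [phiCoeff_succ, norm_div, norm_mul, norm_neg, norm_pow, div_mul_eq_mul_div, mul_comm]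
  gcongr

theorem summable_norm_phiCoeff_mul_pow (hq : ‖q‖ < 1) (z : ℂ) :
    Summable fun k => ‖phiCoeff q k * z ^ k‖ := by
  have hratio : Tendsto (fun k => ‖q‖ ^ k / (1 - ‖q‖) * ‖z‖) atTop (𝓝 0) := by
    simpa using ((tendsto_pow_atTop_nhds_zero_of_lt_one (norm_nonneg q) hq).div_const
      (1 - ‖q‖)).mul_const ‖z‖
  refine summable_of_ratio_norm_eventually_le (r := 1 / 2) (by norm_num) ?_
  filter_upwards [hratio.eventually_le_const (by norm_num : (0 : ℝ) < 1 / 2)] with k hk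
  simp only [norm_norm, norm_mul, norm_pow, pow_succ]
  calc ‖phiCoeff q (k + 1)‖ * (‖z‖ ^ k * ‖z‖)
      ≤ ‖q‖ ^ k / (1 - ‖q‖) * ‖phiCoeff q k‖ * (‖z‖ ^ k * ‖z‖) := by
        gcongr; exact norm_phiCoeff_succ_le hq k
    _ = ‖q‖ ^ k / (1 - ‖q‖) * ‖z‖ * (‖phiCoeff q k‖ * ‖z‖ ^ k) := by ring
    _ ≤ 1 / 2 * (‖phiCoeff q k‖ * ‖z‖ ^ k) := by gcongr

theorem summable_phiCoeff_mul_pow (hq : ‖q‖ < 1) (z : ℂ) :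
    Summable fun k => phiCoeff q k * z ^ k :=
  (summable_norm_phiCoeff_mul_pow hq z).of_norm

theorem phi_zero : phi q 0 = 1 := by
  rw [phi, tsum_eq_single 0 fun k hk => by simp [hk]]
  simp [phiCoeff_zero]

theorem continuous_phi (hq : ‖q‖ < 1) : Continuous (phi q) := by
  refine continuous_iff_continuousAt.2 fun z => ?_
  have hon : ContinuousOn (phi q) (Metric.closedBall z 1) := by
    refine continuousOn_tsum (fun k => (continuous_const.mul (continuous_pow k)).continuousOn)
      (summable_norm_phiCoeff_mul_pow hq ((‖z‖ + 1 : ℝ) : ℂ)) fun k w hw => ?_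
    have hwz : ‖w‖ ≤ ‖z‖ + 1 := norm_le_of_mem_closedBall hw
    rw [norm_mul, norm_mul, norm_pow, norm_pow, Complex.norm_of_nonneg (by positivity)]
    gcongr
  exact hon.continuousAt (Metric.closedBall_mem_nhds z one_pos)

theorem phi_q_difference (hq : ‖q‖ < 1) (hq0 : q ≠ 0) (z : ℂ) :
    q * phi q (q * z) - q * phi q (z / q) = z * phi q z := by
  have hsum₁ := (summable_phiCoeff_mul_pow hq (q * z)).mul_left q
  have hsum₂ := (summable_phiCoeff_mul_pow hq (z / q)).mul_left q
  have hterm : ∀ k : ℕ, q * (phiCoeff q (k + 1) * (q * z) ^ (k + 1)) -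
      q * (phiCoeff q (k + 1) * (z / q) ^ (k + 1)) = z * (phiCoeff q k * z ^ k) := by
    intro k
    have hk := one_sub_pow_ne_zero hq (m := 2 * (k + 1)) (by omega)
    rw [phiCoeff_succ, div_pow, mul_pow]
    field_simp
    ring
  rw [phi, phi, phi, ← tsum_mul_left, ← tsum_mul_left, ← hsum₁.tsum_sub hsum₂,
    (hsum₁.sub hsum₂).tsum_eq_zero_add]
  simp only [hterm, pow_zero, mul_one, sub_self, zero_add, tsum_mul_left]

end phi

noncomputable def phiSol (q w x : ℂ) (n : ℤ) : ℂ := w ^ n * phi q (-(w * x) * q ^ n)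

def casoratian {K : Type*} [Field K] (q : K) (f g : ℤ → K) (n : ℤ) : K :=
  q ^ (-n) * (f (n + 1) * g n - f n * g (n + 1))

section casoratian

variable {K : Type*} [Field K] {q x : K} {f g : ℤ → K}

theorem casoratian_eq_casoratian_zero (hq : q ≠ 0)
    (hf : ∀ n, q ^ (-n + 1) * f (n - 1) + q ^ (-n) * f (n + 1) = x * f n)
    (hg : ∀ n, q ^ (-n + 1) * g (n - 1) + q ^ (-n) * g (n + 1) = x * g n) (n : ℤ) :
    casoratian q f g n = casoratian q f g 0 := by
  have hstep : ∀ n, casoratian q f g n = casoratian q f g (n - 1) := by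
    intro n
    have hf' := hf n
    have hg' := hg n
    rw [zpow_add_one₀ hq] at hf' hg'
    rw [casoratian, casoratian, sub_add_cancel, show -(n - 1) = -n + 1 by ring, zpow_add_one₀ hq]
    linear_combination g n * hf' - f n * hg'
  induction n using Int.induction_on with
  | zero => rfl
  | succ k ih => rw [hstep, add_sub_cancel_right, ih]
  | pred k ih => rw [← ih, hstep (-k)]

theorem eq_zero_of_casoratian_ne_zero {n : ℤ} (hW : casoratian q f g n ≠ 0) {a b : K}
    (hab : ∀ n, a * f n + b * g n = 0) : a = 0 ∧ b = 0 := by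
  have hn := hab n
  have hn' := hab (n + 1)
  constructor
  · refine (mul_eq_zero.1 ?_).resolve_right hW
    rw [casoratian]
    linear_combination q ^ (-n) * (g n * hn' - g (n + 1) * hn)
  · refine (mul_eq_zero.1 ?_).resolve_right hW
    rw [casoratian]
    linear_combination q ^ (-n) * (f (n + 1) * hn - f n * hn')

end casoratian

section phiSol

variable {q w : ℂ}

theorem phiSol_recurrence (hq : ‖q‖ < 1) (hq0 : q ≠ 0) (hw : w ^ 2 = -q) (x : ℂ) (n : ℤ) :
    q ^ (-n + 1) * phiSol q w x (n - 1) + q ^ (-n) * phiSol q w x (n + 1) = x * phiSol q w x n := by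
  have hw0 : w ≠ 0 := (pow_ne_zero_iff two_ne_zero).1 (hw ▸ neg_ne_zero.2 hq0)
  obtain ⟨z, hz⟩ : ∃ z, z = -(w * x) * q ^ n := ⟨_, rfl⟩
  have hqz : -(w * x) * q ^ (n + 1) = q * z := by rw [hz, zpow_add_one₀ hq0]; ring
  have hzq : -(w * x) * q ^ (n - 1) = z / q := by rw [hz, zpow_sub_one₀ hq0]; ring
  have hqn : q ^ (-n) * q ^ n = 1 := by rw [zpow_neg, inv_mul_cancel₀ (zpow_ne_zero n hq0)]
  rw [phiSol, phiSol, phiSol, hqz, hzq, ← hz, zpow_sub_one₀ hw0, zpow_add_one₀ hw0,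
    zpow_add_one₀ hq0]
  field_simp
  linear_combination q ^ (-n) * phi q (q * z) * hw - q ^ (-n) * phi_q_difference hq hq0 z
    + w * x * phi q z * hqn - q ^ (-n) * phi q z * hz

theorem casoratian_phiSol_neg_eq (hq0 : q ≠ 0) (hw : w ^ 2 = -q) (x : ℂ) (n : ℤ) :
    casoratian q (phiSol q w x) (phiSol q (-w) x) n =
      w * (phi q (-(w * x) * q ^ (n + 1)) * phi q (-(-w * x) * q ^ n) +
        phi q (-(w * x) * q ^ n) * phi q (-(-w * x) * q ^ (n + 1))) := by
  have hw0 : w ≠ 0 := (pow_ne_zero_iff two_ne_zero).1 (hw ▸ neg_ne_zero.2 hq0)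
  have hpow : q ^ (-n) * (w ^ n * (-w) ^ n) = 1 := by
    rw [← mul_zpow, show w * -w = q by linear_combination -hw, zpow_neg,
      inv_mul_cancel₀ (zpow_ne_zero n hq0)]
  rw [casoratian, phiSol, phiSol, phiSol, phiSol, zpow_add_one₀ hw0,
    zpow_add_one₀ (neg_ne_zero.2 hw0)]
  linear_combination w * (phi q (-(w * x) * q ^ (n + 1)) * phi q (-(-w * x) * q ^ n) +
    phi q (-(w * x) * q ^ n) * phi q (-(-w * x) * q ^ (n + 1))) * hpow

theorem tendsto_phi_mul_zpow (hq : ‖q‖ < 1) (c : ℂ) :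
    Tendsto (fun N : ℕ => phi q (c * q ^ (N : ℤ))) atTop (𝓝 1) := by
  have hlim : Tendsto (fun N : ℕ => c * q ^ (N : ℤ)) atTop (𝓝 0) := by
    simpa using (tendsto_pow_atTop_nhds_zero_of_norm_lt_one hq).const_mul c
  have h := ((continuous_phi hq).tendsto 0).comp hlim
  rwa [phi_zero] at h

theorem tendsto_casoratian_phiSol_neg (hq : ‖q‖ < 1) (hq0 : q ≠ 0) (hw : w ^ 2 = -q) (x : ℂ) :
    Tendsto (fun N : ℕ => casoratian q (phiSol q w x) (phiSol q (-w) x) N) atTop (𝓝 (2 * w)) := by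
  have hsucc (c : ℂ) : Tendsto (fun N : ℕ => phi q (c * q ^ ((N : ℤ) + 1))) atTop (𝓝 1) :=
    (tendsto_phi_mul_zpow hq (c * q)).congr fun N => by rw [zpow_add_one₀ hq0]; ring_nf
  have hlim := (((hsucc (-(w * x))).mul (tendsto_phi_mul_zpow hq (-(-w * x)))).add
    ((tendsto_phi_mul_zpow hq (-(w * x))).mul (hsucc (-(-w * x))))).const_mul w
  rw [show w * (1 * 1 + 1 * 1) = 2 * w by ring] at hlim
  exact hlim.congr fun N => (casoratian_phiSol_neg_eq hq0 hw x N).symm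

theorem casoratian_phiSol_neg (hq : ‖q‖ < 1) (hq0 : q ≠ 0) (hw : w ^ 2 = -q) (x : ℂ) (n : ℤ) :
    casoratian q (phiSol q w x) (phiSol q (-w) x) n = 2 * w := by
  have hconst := casoratian_eq_casoratian_zero hq0 (phiSol_recurrence hq hq0 hw x)
    (phiSol_recurrence hq hq0 (by rw [neg_sq, hw]) x)
  rw [hconst]
  exact tendsto_const_nhds_iff.1
    ((tendsto_casoratian_phiSol_neg hq hq0 hw x).congr fun N : ℕ => hconst N)

end phiSol

section psi

variable {q : ℝ}

theorem qr_half_sq (hq : 0 ≤ q) : qr q (1 / 2) ^ 2 = q := by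
  rw [qr, ← Complex.ofReal_pow, ← Real.sqrt_eq_rpow, Real.sq_sqrt hq]

theorem qr_half_ne_zero (hq : 0 < q) : qr q (1 / 2) ≠ 0 :=
  Complex.ofReal_ne_zero.2 (Real.rpow_pos_of_pos hq _).ne'

theorem psi_eq_phiSol (hq : 0 < q) (s x : ℂ) :
    psi q s x = phiSol q (s * I * qr q (1 / 2)) x := by
  have hhalf (n : ℤ) : qr q ((n : ℝ) / 2) = qr q (1 / 2) ^ n := by
    rw [qr, qr, div_eq_inv_mul, ← one_div, Real.rpow_mul hq.le, Real.rpow_intCast,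
      Complex.ofReal_zpow]
  have hshift (n : ℤ) : qr q ((n : ℝ) + 1 / 2) = (q : ℂ) ^ n * qr q (1 / 2) := by
    rw [qr, qr, Real.rpow_add hq, Real.rpow_intCast, Complex.ofReal_mul, Complex.ofReal_zpow]
  funext n
  rw [psi, phiSol, phi, hhalf, hshift, mul_zpow (s * I)]
  congr 1
  refine tsum_congr fun k => ?_
  rw [phiCoeff]
  ring

end psi

theorem stmt_0 (q : ℝ) (hq0 : 0 < q) (hq1 : q < 1) (x : ℂ) :
    (∀ s ∈ ({1, -1} : Set ℂ), ∀ n : ℤ,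
      (q : ℂ) ^ (-n + 1) * psi q s x (n - 1) + (q : ℂ) ^ (-n) * psi q s x (n + 1)
        = x * psi q s x n) ∧
    (∀ n : ℤ,
      (q : ℂ) ^ (-n) *
        (psi q 1 x (n + 1) * psi q (-1) x n - psi q 1 x n * psi q (-1) x (n + 1))
          = 2 * Complex.I * qr q (1 / 2)) ∧
    (∀ a b : ℂ, (∀ n : ℤ, a * psi q 1 x n + b * psi q (-1) x n = 0) → a = 0 ∧ b = 0) := by
  have hq : ‖(q : ℂ)‖ < 1 := by rwa [Complex.norm_of_nonneg hq0.le]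
  have hq0' : (q : ℂ) ≠ 0 := Complex.ofReal_ne_zero.2 hq0.ne'
  have hw (s : ℂ) (hs : s ^ 2 = 1) : (s * I * qr q (1 / 2)) ^ 2 = -q := by
    rw [mul_pow, mul_pow, hs, I_sq, qr_half_sq hq0.le]; ring
  have hW (n : ℤ) : casoratian (q : ℂ) (psi q 1 x) (psi q (-1) x) n = 2 * I * qr q (1 / 2) := by
    rw [psi_eq_phiSol hq0, psi_eq_phiSol hq0,
      show (-1 : ℂ) * I * qr q (1 / 2) = -(1 * I * qr q (1 / 2)) by ring,
      casoratian_phiSol_neg hq hq0' (hw 1 (one_pow 2))]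
    ring
  have hW0 : casoratian (q : ℂ) (psi q 1 x) (psi q (-1) x) 0 ≠ 0 := by
    rw [hW]
    exact mul_ne_zero (mul_ne_zero two_ne_zero I_ne_zero) (qr_half_ne_zero hq0)
  refine ⟨fun s hs n => ?_, hW, fun a b => eq_zero_of_casoratian_ne_zero hW0⟩
  have hs2 : s ^ 2 = 1 := by rcases hs with rfl | rfl <;> norm_num
  rw [psi_eq_phiSol hq0]
  exact phiSol_recurrence hq hq0' (hw s hs2) x n
end

section
/- For every α ∈ ℝ and every x ∈ [−2, 2], the only sequence v = {v_n}_{n∈ℤ} of complex numbers satisfying v_{n−1} + (α q^{−n} − x) v_n + v_{n+1} = 0 for all n ∈ ℤ and ∑_{n∈ℤ} |v_n|² < ∞ is the zero sequence. -/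
/-!
As `n → -∞` the potential `α q^{-n}` decays geometrically, so far out on the negative side the
recurrence is a small perturbation of the free recurrence `v_{n-1} + v_{n+1} = x v_n`. For
`x ∈ [-2, 2]` the characteristic roots `L, M` of the free recurrence have modulus one, so the free
solutions do not decay. Factoring the perturbed recurrence through `L` and `M` and summing the
errors from infinity shows that a solution tending to `0` along the tail is bounded by a fixed
multiple `θ < 1` of its own supremum, hence vanishes there. Two consecutive zeros then propagate
through the whole recurrence.
-/

open Complex ComplexConjugate Filter Topology

theorem exists_roots_norm_eq_one_of_sq_le_four {x : ℝ} (hx : x ^ 2 ≤ 4) :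
    ∃ L M : ℂ, ‖L‖ = 1 ∧ ‖M‖ = 1 ∧ L + M = x ∧ L * M = 1 := by
  let L : ℂ := ⟨x / 2, √(4 - x ^ 2) / 2⟩
  have hL : normSq L = 1 := by
    simp only [L, normSq_mk]
    nlinarith [Real.sq_sqrt (sub_nonneg.mpr hx)]
  have hnorm : ‖L‖ = 1 := by rw [norm_def, hL, Real.sqrt_one]
  refine ⟨L, conj L, hnorm, by rw [norm_conj, hnorm], ?_, by rw [mul_conj, hL, ofReal_one]⟩
  rw [add_conj]
  push_cast [L]
  ring

/-- The constant is the sum of the geometric tail: `g m := f m - C / (1 - q) * q ^ (m + 1)` is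
monotone and tends to `0`. -/
theorem le_geometric_of_le_succ_add_geometric {f : ℕ → ℝ} {q C : ℝ} (hq : |q| < 1)
    (hstep : ∀ m, f m ≤ f (m + 1) + C * q ^ (m + 1)) (hf : Tendsto f atTop (𝓝 0)) (m : ℕ) :
    f m ≤ C / (1 - q) * q ^ (m + 1) := by
  have hq1 : 1 - q ≠ 0 := by linarith [(abs_lt.mp hq).2]
  set g : ℕ → ℝ := fun m => f m - C / (1 - q) * q ^ (m + 1)
  have hmono : Monotone g := monotone_nat_of_le_succ fun m => by
    have : C * q ^ (m + 1) - C / (1 - q) * q ^ (m + 1) = -(C / (1 - q) * q ^ (m + 2)) := by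
      field_simp
      ring
    simp only [g]
    linarith [hstep m]
  have hg : Tendsto g atTop (𝓝 0) := by
    simpa using hf.sub
      (((tendsto_pow_atTop_nhds_zero_of_abs_lt_one hq).comp (tendsto_add_atTop_nat 1)).const_mul
        (C / (1 - q)))
  linarith [hmono.ge_of_tendsto hg m]

section PerturbedFree

variable {x q b T : ℝ} {c u : ℕ → ℂ}

/-- With `w m := u (m + 1) - L * u m`, the recurrence becomes
`w (m + 1) = M * w m - c m * u (m + 1)`; since `‖L‖ = ‖M‖ = 1`, both `‖w‖` and `‖u‖` only change by geometrically small amounts. -/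
theorem norm_le_of_perturbed_free (hx : x ^ 2 ≤ 4) (hq : |q| < 1)
    (hc : ∀ m, ‖c m‖ ≤ b * q ^ (m + 1))
    (hrec : ∀ m, u (m + 2) = (x - c m) * u (m + 1) - u m)
    (hu : Tendsto u atTop (𝓝 0)) (hT : ∀ m, ‖u m‖ ≤ T) (m : ℕ) :
    ‖u m‖ ≤ b * T / (1 - q) ^ 2 * q ^ (m + 1) := by
  obtain ⟨L, M, hL, hM, hsum, hprod⟩ := exists_roots_norm_eq_one_of_sq_le_four hx
  set w : ℕ → ℂ := fun m => u (m + 1) - L * u m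
  have hw_rec : ∀ m, M * w m = w (m + 1) + c m * u (m + 1) := fun m => by
    simp only [w]
    linear_combination (-1 : ℂ) * hrec m - u m * hprod + u (m + 1) * hsum
  have hw_norm : ∀ m, ‖w m‖ ≤ ‖w (m + 1)‖ + b * T * q ^ (m + 1) := fun m =>
    calc ‖w m‖ = ‖w (m + 1) + c m * u (m + 1)‖ := by rw [← hw_rec, norm_mul, hM, one_mul]
      _ ≤ ‖w (m + 1)‖ + ‖c m‖ * ‖u (m + 1)‖ := (norm_add_le _ _).trans_eq (by rw [norm_mul])
      _ ≤ ‖w (m + 1)‖ + b * q ^ (m + 1) * T := by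
        gcongr
        exacts [(norm_nonneg _).trans (hc m), hc m, hT _]
      _ = ‖w (m + 1)‖ + b * T * q ^ (m + 1) := by ring
  have hw : Tendsto w atTop (𝓝 0) := by
    simpa using (hu.comp (tendsto_add_atTop_nat 1)).sub (hu.const_mul L)
  have hw_bound := le_geometric_of_le_succ_add_geometric hq hw_norm (by simpa using hw.norm)
  have hu_norm : ∀ m, ‖u m‖ ≤ ‖u (m + 1)‖ + b * T / (1 - q) * q ^ (m + 1) := fun m =>
    calc ‖u m‖ = ‖u (m + 1) - w m‖ := by
          rw [← one_mul ‖u m‖, ← hL, ← norm_mul]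
          simp [w]
      _ ≤ ‖u (m + 1)‖ + ‖w m‖ := norm_sub_le _ _
      _ ≤ ‖u (m + 1)‖ + b * T / (1 - q) * q ^ (m + 1) := by gcongr; exact hw_bound m
  exact (le_geometric_of_le_succ_add_geometric hq hu_norm (by simpa using hu.norm) m).trans_eq
    (by rw [div_div, ← sq])

theorem eq_zero_of_tendsto_of_perturbed_free (hx : x ^ 2 ≤ 4) (hq0 : 0 ≤ q) (hq1 : q < 1)
    (hb : b * q / (1 - q) ^ 2 < 1) (hc : ∀ m, ‖c m‖ ≤ b * q ^ (m + 1))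
    (hrec : ∀ m, u (m + 2) = (x - c m) * u (m + 1) - u m) (hu : Tendsto u atTop (𝓝 0)) :
    u = 0 := by
  set T := ⨆ m, ‖u m‖
  have hle_T : ∀ m, ‖u m‖ ≤ T := le_ciSup hu.norm.bddAbove_range
  have hT0 : 0 ≤ T := (norm_nonneg _).trans (hle_T 0)
  have hbq : 0 ≤ b * q := (norm_nonneg _).trans ((hc 0).trans_eq (by ring))
  have hcontr : ∀ m, ‖u m‖ ≤ b * q / (1 - q) ^ 2 * T := fun m =>
    calc ‖u m‖ ≤ b * T / (1 - q) ^ 2 * q ^ (m + 1) :=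
          norm_le_of_perturbed_free hx (abs_lt.mpr ⟨by linarith, hq1⟩) hc hrec hu hle_T m
      _ = b * q / (1 - q) ^ 2 * T * q ^ m := by ring
      _ ≤ b * q / (1 - q) ^ 2 * T := mul_le_of_le_one_right (by positivity) (pow_le_one₀ hq0 hq1.le)
  have hT : T ≤ 0 := by nlinarith [ciSup_le hcontr]
  funext m
  exact norm_le_zero_iff.mp ((hle_T m).trans hT)

end PerturbedFree

theorem eq_zero_of_recurrence_of_forall_le {R : Type*} [Semiring R] {a v : ℤ → R} (N : ℤ)
    (hrec : ∀ n, v (n - 1) + a n * v n + v (n + 1) = 0) (hv : ∀ n ≤ N, v n = 0) : v = 0 := by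
  have hup : ∀ n, N ≤ n → v (n - 1) = 0 ∧ v n = 0 := by
    refine Int.leInduction ⟨hv _ (by omega), hv _ le_rfl⟩ fun n _ ⟨h₁, h₂⟩ => ⟨by simpa, ?_⟩
    simpa [h₁, h₂] using hrec n
  funext n
  rcases le_total n N with hn | hn
  exacts [hv n hn, (hup n hn).2]

theorem stmt_15 (q : ℝ) (hq0 : 0 < q) (hq1 : q < 1) (α : ℝ) (x : ℝ)
    (hx : x ∈ Set.Icc (-2 : ℝ) 2) (v : ℤ → ℂ)
    (hrec : ∀ n : ℤ, v (n - 1) + ((α : ℂ) * (q : ℂ) ^ (-n) - (x : ℂ)) * v n + v (n + 1) = 0)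
    (hsum : Summable (fun n : ℤ => ‖v n‖ ^ 2)) :
    ∀ n : ℤ, v n = 0 := by
  have hv : Tendsto v cofinite (𝓝 0) := by
    rw [tendsto_zero_iff_norm_tendsto_zero]
    simpa using hsum.tendsto_cofinite_zero.sqrt
  obtain ⟨m₀, hm₀⟩ : ∃ m₀ : ℕ, |α| * q ^ m₀ * q / (1 - q) ^ 2 < 1 :=
    ((((tendsto_pow_atTop_nhds_zero_of_lt_one hq0.le hq1).const_mul |α|).mul_const q).div_const
      ((1 - q) ^ 2) |>.eventually_lt_const (by simp : |α| * 0 * q / (1 - q) ^ 2 < 1)).exists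
  set u : ℕ → ℂ := fun m => v (-(m₀ + m : ℕ))
  have hu_rec : ∀ m, u (m + 2) = (x - α * q ^ (m₀ + m + 1)) * u (m + 1) - u m := fun m => by
    have h := hrec (-(m₀ + m + 1 : ℕ))
    rw [neg_neg, zpow_natCast, show -((m₀ + m + 1 : ℕ) : ℤ) - 1 = -(m₀ + m + 2 : ℕ) by omega,
      show -((m₀ + m + 1 : ℕ) : ℤ) + 1 = -(m₀ + m : ℕ) by omega] at h
    simp only [u, ← add_assoc]
    linear_combination h
  have hc : ∀ m, ‖(α : ℂ) * q ^ (m₀ + m + 1)‖ ≤ |α| * q ^ m₀ * q ^ (m + 1) := fun m => by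
    rw [norm_mul, norm_pow, norm_real, norm_real, Real.norm_eq_abs, Real.norm_of_nonneg hq0.le]
    exact le_of_eq (by ring)
  have hu : Tendsto u atTop (𝓝 0) := by
    refine hv.comp (Nat.cofinite_eq_atTop ▸ Function.Injective.tendsto_cofinite fun a b h => ?_)
    simp only [neg_inj, Nat.cast_inj] at h
    omega
  have hu0 := eq_zero_of_tendsto_of_perturbed_free (by nlinarith [hx.1, hx.2]) hq0.le hq1 hm₀ hc
    hu_rec hu
  refine congrFun (eq_zero_of_recurrence_of_forall_le (-m₀) hrec fun n hn => ?_)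
  obtain ⟨m, rfl⟩ : ∃ m : ℕ, n = -(m₀ + m : ℕ) := ⟨(-n - m₀).toNat, by omega⟩
  exact congrFun hu0 m
end
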